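/- The poset P of conditions satisfies the countable chain condition: for every uncountable set S⊆P there exist distinct p,q∈S and r∈P with r≤p and r≤q; equivalently, every antichain of P is countable. -/

import Mathlib

noncomputable section

/-- The countable ordinals: the ordinals below `ω₁`. -/
abbrev CtblOrd : Type _ := {o : Ordinal // o < (Cardinal.aleph 1).ord}

/-- A condition `p = ⟨A_p, n_p, U_p⟩`: `A_p` is a finite set of countable ordinals,
`n_p ∈ ω`, and `U_p` is a function from `A_p × n_p` to `𝒫(A_p)` (encoded as a total
function that takes the default value `∅` outside its domain) satisfying (P2) and (P3). -/
structure Cond where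
  /-- the finite set `A_p ⊆ ω₁` -/
  A : Finset CtblOrd
  /-- the natural number `n_p` -/
  n : ℕ
  /-- the function `U_p : A_p × n_p → 𝒫(A_p)` -/
  U : CtblOrd → ℕ → Finset CtblOrd
  default_empty : ∀ α i, ¬(α ∈ A ∧ i < n) → U α i = ∅
  mem_powerset : ∀ α ∈ A, ∀ i < n, U α i ⊆ A
  P2_self : ∀ α ∈ A, ∀ i < n, α ∈ U α i
  P2_mono : ∀ α ∈ A, ∀ i, 1 ≤ i → i < n → U α i ⊆ U α (i - 1)
  P3 : ∀ α ∈ A, ∀ β ∈ A, ∀ i < n, β ∈ U α i → U α i ⊆ U β 0 → β ≤ α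

/-- `Cond.le q p` means `q ≤ p`: clauses (a), (b), (c), (d1), (d2). -/
def Cond.le (q p : Cond) : Prop :=
  p.A ⊆ q.A ∧ p.n ≤ q.n ∧
  (∀ α ∈ p.A, ∀ i < p.n, p.U α i = q.U α i ∩ p.A) ∧
  (∀ α ∈ p.A, ∀ i < p.n, ∀ β ∈ p.A, ∀ j < p.n,
    p.U α i ∩ p.U β j = ∅ → q.U α i ∩ q.U β j = ∅) ∧
  (∀ α ∈ p.A, ∀ i < p.n, ∀ β ∈ p.A, ∀ j < p.n,
    p.U α i ⊆ p.U β j → q.U α i ⊆ q.U β j)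

/-- `p0` and `p1` are twins with twin function `σ`: `n₀ = n₁`, `|A₀| = |A₁|`, `σ` is the
(unique) order preserving bijection from `A₀` onto `A₁`, (I1) `σ` is the identity on
`A₀ ∩ A₁`, and (I2) `U₁(σ(α), i) = σ''U₀(α, i)` for all `α ∈ A₀`, `i < n₀`. -/
def Twins (p0 p1 : Cond) (σ : CtblOrd → CtblOrd) : Prop :=
  p0.n = p1.n ∧ p0.A.card = p1.A.card ∧
  p0.A.image σ = p1.A ∧
  (∀ α ∈ p0.A, ∀ β ∈ p0.A, α < β → σ α < σ β) ∧
  (∀ δ ∈ p0.A ∩ p1.A, σ δ = δ) ∧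
  (∀ α ∈ p0.A, ∀ i < p0.n, p1.U (σ α) i = (p0.U α i).image σ)

/-- The triple `⟨A, n, U⟩` extends the condition `p` in the ordering of `P`:
clauses (a), (b), (c), (d1), (d2). -/
def ExtendsTriple (A : Finset CtblOrd) (n : ℕ) (U : CtblOrd → ℕ → Finset CtblOrd)
    (p : Cond) : Prop :=
  p.A ⊆ A ∧ p.n ≤ n ∧
  (∀ α ∈ p.A, ∀ i < p.n, p.U α i = U α i ∩ p.A) ∧
  (∀ α ∈ p.A, ∀ i < p.n, ∀ β ∈ p.A, ∀ j < p.n,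
    p.U α i ∩ p.U β j = ∅ → U α i ∩ U β j = ∅) ∧
  (∀ α ∈ p.A, ∀ i < p.n, ∀ β ∈ p.A, ∀ j < p.n,
    p.U α i ⊆ p.U β j → U α i ⊆ U β j)

/-!
Conditions are sorted by a countable invariant, their pattern: `|A_p|`, `n_p` and `U_p`
transported to `{0, …, |A_p| - 1}` along the increasing enumeration of `A_p`. Among uncountably
many conditions, a Δ-system argument yields two, `p` and `q`, with the same pattern and
`A_p ∩ A_q < A_p \ A_q < A_q \ A_p`. They are twins, and the increasing bijection
`σ : A_p → A_q` fixes the root `A_p ∩ A_q`.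

Their common extension lives on `A_p ∪ A_q`: the neighbourhood of `(x, i)` is
`U_p(x,i) ∪ U_q(x,i)` together with `U_p(z,k) ∪ U_q(z,k)` for every root point `z` whose
`(z,k)`-neighbourhood lies inside that of `(x,i)` in `p` or in `q`. The map that is the identity
on `A_q` and `σ` on `A_p` retracts it onto `q`, which gives clauses (c) and (d1); by symmetry the
same holds for `p`. The ordering of the sets is needed only for (P3) between points on different
sides.
-/

open Finset

instance : Nonempty CtblOrd :=
  ⟨⟨0, Cardinal.ord_pos.mpr (Cardinal.aleph_pos 1)⟩⟩

instance : NoMaxOrder CtblOrd where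
  exists_gt a := ⟨⟨Order.succ a.1,
    (Cardinal.isSuccLimit_ord (Cardinal.aleph0_le_aleph 1)).succ_lt a.2⟩, Order.lt_succ a.1⟩

theorem CtblOrd.countable_Iio (a : CtblOrd) : (Set.Iio a).Countable := by
  have hIio : (Set.Iio a.1).Countable := by
    rw [← Cardinal.le_aleph0_iff_set_countable, Cardinal.mk_Iio_ordinal, Cardinal.lift_le_aleph0,
      ← Cardinal.lt_aleph_one_iff, ← Cardinal.lt_ord]
    exact a.2
  exact hIio.preimage Subtype.val_injective

theorem Finset.exists_forall_lt {α : Type*} [LinearOrder α] [Nonempty α] [NoMaxOrder α]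
    (s : Finset α) : ∃ b, ∀ a ∈ s, a < b := by
  obtain ⟨M, hM⟩ := s.exists_le
  obtain ⟨b, hb⟩ := exists_gt M
  exact ⟨b, fun a ha => (hM a ha).trans_lt hb⟩

section DeltaSystem

variable {ι α : Type*} (A : ι → Finset α)

theorem Set.nonempty_of_not_countable {s : Set ι} (hs : ¬s.Countable) : s.Nonempty :=
  Set.Infinite.nonempty fun hf => hs hf.countable

theorem exists_not_countable_fiber {β : Type*} [Countable β] {S : Set ι} (hS : ¬S.Countable)
    (f : ι → β) : ∃ b, ¬{i ∈ S | f i = b}.Countable := by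
  by_contra! h
  refine hS ((Set.countable_iUnion h).mono fun i hi => ?_)
  exact Set.mem_iUnion.mpr ⟨f i, hi, rfl⟩

theorem exists_root {S : Set ι} (hS : ¬S.Countable) :
    ∃ R : Finset α, ∃ T ⊆ S, ¬T.Countable ∧ (∀ i ∈ T, R ⊆ A i) ∧
      ∀ ξ ∉ R, {i ∈ T | ξ ∈ A i}.Countable := by
  classical
  obtain ⟨m, hm⟩ := exists_not_countable_fiber hS fun i => #(A i)
  let frequent (R : Finset α) : Prop := ¬{i | i ∈ S ∧ #(A i) = m ∧ R ⊆ A i}.Countable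
  have hfreq0 : frequent ∅ := by simpa only [frequent, empty_subset, and_true] using hm
  -- Fixing the size `m` of the sets bounds `#R`, so a frequent `R` of maximal size exists.
  obtain ⟨R, hR, hmax⟩ :=
    (measure fun R : Finset α => m - #R).wf.has_min {R | frequent R} ⟨∅, hfreq0⟩
  refine ⟨R, {i | i ∈ S ∧ #(A i) = m ∧ R ⊆ A i}, fun i hi => hi.1, hR, fun i hi => hi.2.2, ?_⟩
  intro ξ hξ
  by_contra hξfreq
  have hins : frequent (insert ξ R) := fun h => hξfreq <| h.mono fun i hi =>
    show i ∈ S ∧ #(A i) = m ∧ insert ξ R ⊆ A i from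
      ⟨hi.1.1, hi.1.2.1, insert_subset hi.2 hi.1.2.2⟩
  obtain ⟨i, -, hcard, hsub⟩ := Set.nonempty_of_not_countable hins
  have hle : #(insert ξ R) ≤ m := hcard ▸ card_le_card hsub
  rw [card_insert_of_notMem hξ] at hle
  exact hmax _ hins (show m - #(insert ξ R) < m - #R by rw [card_insert_of_notMem hξ]; omega)

theorem exists_separated_pair [LinearOrder α] [Nonempty α] [NoMaxOrder α]
    (hα : ∀ a : α, (Set.Iio a).Countable) {S : Set ι} (hS : ¬S.Countable) :
    ∃ p ∈ S, ∃ q ∈ S, p ≠ q ∧ (∀ x ∈ A p, ∀ y ∈ A q, y ∉ A p → x < y) ∧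
      (∀ x ∈ A p, x ∈ A q → ∀ y ∈ A p, y ∉ A q → x < y) := by
  obtain ⟨R, T, hTS, hT, hRT, hsparse⟩ := exists_root A hS
  let low (b : α) : Set ι := {i ∈ T | ∃ ξ ∈ A i, ξ ∉ R ∧ ξ < b}
  have hlow (b : α) : (low b).Countable := by
    refine (((hα b).mono Set.sdiff_subset).biUnion fun ξ hξ => hsparse ξ hξ.2).mono ?_
    rintro i ⟨hiT, ξ, hξi, hξR, hξb⟩
    exact Set.mem_biUnion (x := ξ) ⟨hξb, hξR⟩ ⟨hiT, hξi⟩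
  have hhigh {i : ι} {b : α} (hi : i ∉ low b) (hiT : i ∈ T) : ∀ ξ ∈ A i, ξ ∉ R → b ≤ ξ :=
    fun ξ hξi hξR => not_lt.mp fun hξb => hi ⟨hiT, ξ, hξi, hξR, hξb⟩
  obtain ⟨bR, hbR⟩ := R.exists_forall_lt
  obtain ⟨p, hpT, hp⟩ := Set.nonempty_of_not_countable
    fun h => hT ((h.union (hlow bR)).mono (Set.subset_sdiff_union _ _))
  obtain ⟨bp, hbp⟩ := (A p).exists_forall_lt
  obtain ⟨q, hqT, hq⟩ := Set.nonempty_of_not_countable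
    fun h => hT <| (h.union ((hlow bp).union (Set.countable_singleton p))).mono
      (Set.subset_sdiff_union _ _)
  obtain ⟨hq, hqp⟩ := not_or.mp hq
  have hS1 : ∀ x ∈ A p, ∀ y ∈ A q, y ∉ A p → x < y := fun x hx y hy hyp =>
    (hbp x hx).trans_le (hhigh hq hqT y hy fun hyR => hyp (hRT p hpT hyR))
  refine ⟨p, hTS hpT, q, hTS hqT, Ne.symm hqp, hS1, fun x hxp hxq y hyp hyq => ?_⟩
  have hxR : x ∈ R := by_contra fun hxR => (hhigh hq hqT x hxq hxR).not_gt (hbp x hxp)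
  exact (hbR x hxR).trans_le (hhigh hp hpT y hyp fun hyR => hyq (hRT q hqT hyR))

end DeltaSystem

section Rank

variable {α β : Type*} [LinearOrder α] [LinearOrder β]

def rankIn (s : Finset α) (x : α) : ℕ := #{y ∈ s | y < x}

theorem rankIn_injOn (s : Finset α) : Set.InjOn (rankIn s) s := by
  intro x hx y hy hxy
  by_contra hne
  wlog hlt : x < y generalizing x y
  · exact this hy hx hxy.symm (Ne.symm hne) ((not_lt.mp hlt).lt_of_ne (Ne.symm hne))
  have hssub : {z ∈ s | z < x} ⊂ {z ∈ s | z < y} :=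
    (ssubset_iff_of_subset fun z hz => mem_filter.mpr
      ⟨(mem_filter.mp hz).1, (mem_filter.mp hz).2.trans hlt⟩).mpr
      ⟨x, mem_filter.mpr ⟨hx, hlt⟩, fun h => (mem_filter.mp h).2.false⟩
  exact (card_lt_card hssub).ne hxy

theorem StrictMonoOn.rankIn_image [DecidableEq β] {σ : α → β} {s : Finset α}
    (hσ : StrictMonoOn σ s) {x : α} (hx : x ∈ s) : rankIn (s.image σ) (σ x) = rankIn s x := by
  rw [rankIn, rankIn, ← card_image_of_injOn (hσ.injOn.mono (filter_subset _ s)), filter_image]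
  congr 1
  ext y
  simp only [mem_image, mem_filter]
  constructor
  · rintro ⟨z, ⟨hz, hzx⟩, rfl⟩
    exact ⟨z, ⟨hz, (hσ.lt_iff_lt hz hx).mp hzx⟩, rfl⟩
  · rintro ⟨z, ⟨hz, hzx⟩, rfl⟩
    exact ⟨z, ⟨hz, (hσ.lt_iff_lt hz hx).mpr hzx⟩, rfl⟩

theorem Finset.exists_strictMonoOn_image_eq [DecidableEq α] {s t : Finset α} (h : #s = #t) :
    ∃ σ : α → α, StrictMonoOn σ s ∧ s.image σ = t := by
  let e : s ≃o t := (s.orderIsoOfFin rfl).symm.trans (t.orderIsoOfFin h.symm)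
  refine ⟨fun x => if hx : x ∈ s then e ⟨x, hx⟩ else x, fun x hx y hy hxy => ?_, ?_⟩
  · simp only [dif_pos (mem_coe.mp hx), dif_pos (mem_coe.mp hy)]
    exact e.lt_iff_lt.mpr hxy
  · ext y
    simp only [mem_image]
    refine ⟨?_, fun hy => ⟨e.symm ⟨y, hy⟩, (e.symm ⟨y, hy⟩).2, by simp⟩⟩
    rintro ⟨x, hx, rfl⟩
    simp [dif_pos hx]

end Rank

namespace Cond

variable {p q : Cond} {σ : CtblOrd → CtblOrd} {x w : CtblOrd} {i : ℕ}

theorem dom_of_mem_U (hw : w ∈ p.U x i) : x ∈ p.A ∧ i < p.n := by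
  by_contra h
  simp [p.default_empty x i h] at hw

theorem mem_A_of_mem_U (hw : w ∈ p.U x i) : w ∈ p.A :=
  p.mem_powerset x (dom_of_mem_U hw).1 i (dom_of_mem_U hw).2 hw

theorem U_antitone (p : Cond) (x : CtblOrd) : Antitone (p.U x) := by
  refine antitone_nat_of_succ_le fun i => ?_
  by_cases hx : x ∈ p.A ∧ i + 1 < p.n
  · exact p.P2_mono x hx.1 (i + 1) (Nat.le_add_left 1 i) hx.2
  · rw [p.default_empty x (i + 1) hx]
    exact empty_subset _

def pattern (p : Cond) : ℕ × ℕ × Finset (ℕ × ℕ × ℕ) :=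
  (#p.A, p.n, {t ∈ p.A ×ˢ range p.n ×ˢ p.A | t.2.2 ∈ p.U t.1 t.2.1}.image
    fun t => (rankIn p.A t.1, t.2.1, rankIn p.A t.2.2))

theorem mem_U_iff_mem_pattern {a b : CtblOrd} (ha : a ∈ p.A) (hb : b ∈ p.A) :
    b ∈ p.U a i ↔ (rankIn p.A a, i, rankIn p.A b) ∈ p.pattern.2.2 := by
  simp only [pattern, mem_image, mem_filter, mem_product, mem_range, Prod.mk.injEq]
  constructor
  · intro hab
    exact ⟨(a, i, b), ⟨⟨ha, (dom_of_mem_U hab).2, hb⟩, hab⟩, rfl, rfl, rfl⟩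
  · rintro ⟨⟨a', i', b'⟩, ⟨⟨ha', -, hb'⟩, hab'⟩, hra, rfl, hrb⟩
    rwa [← rankIn_injOn p.A ha' ha hra, ← rankIn_injOn p.A hb' hb hrb]

theorem map_mem_U_iff_of_pattern_eq (h : p.pattern = q.pattern) (hσ : StrictMonoOn σ p.A)
    (him : p.A.image σ = q.A) {a b : CtblOrd} (ha : a ∈ p.A) (hb : b ∈ p.A) :
    σ b ∈ q.U (σ a) i ↔ b ∈ p.U a i := by
  have hσA : ∀ x ∈ p.A, σ x ∈ q.A := fun x hx => him ▸ mem_image_of_mem σ hx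
  rw [mem_U_iff_mem_pattern (hσA a ha) (hσA b hb), mem_U_iff_mem_pattern ha hb, ← h, ← him,
    hσ.rankIn_image ha, hσ.rankIn_image hb]

theorem exists_twins_of_pattern_eq (h : p.pattern = q.pattern)
    (hS1 : ∀ x ∈ p.A, ∀ y ∈ q.A, y ∉ p.A → x < y)
    (hS2 : ∀ x ∈ p.A, x ∈ q.A → ∀ y ∈ p.A, y ∉ q.A → x < y) : ∃ σ, Twins p q σ := by
  have hcard : #p.A = #q.A := congrArg Prod.fst h
  obtain ⟨σ, hσ, him⟩ := exists_strictMonoOn_image_eq hcard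
  refine ⟨σ, congrArg (·.2.1) h, hcard, him, fun a ha b hb hab => hσ ha hb hab, ?_, ?_⟩
  · intro δ hδ
    obtain ⟨hδp, hδq⟩ := mem_inter.mp hδ
    have hrank : rankIn p.A δ = rankIn q.A δ := by
      unfold rankIn
      congr 1
      ext x
      simp only [mem_filter]
      constructor
      · rintro ⟨hx, hxδ⟩
        exact ⟨by_contra fun hxq => (hS2 δ hδp hδq x hx hxq).not_gt hxδ, hxδ⟩
      · rintro ⟨hx, hxδ⟩
        exact ⟨by_contra fun hxp => (hS1 δ hδp x hx hxp).not_gt hxδ, hxδ⟩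
    refine rankIn_injOn q.A (him ▸ mem_image_of_mem σ hδp) hδq ?_
    rw [← hrank, ← hσ.rankIn_image hδp, him]
  · intro a ha i _
    ext w
    constructor
    · intro hw
      obtain ⟨b, hb, rfl⟩ := mem_image.mp (him ▸ mem_A_of_mem_U hw)
      exact mem_image_of_mem σ ((map_mem_U_iff_of_pattern_eq h hσ him ha hb).mp hw)
    · intro hw
      obtain ⟨b, hb, rfl⟩ := mem_image.mp hw
      exact (map_mem_U_iff_of_pattern_eq h hσ him ha (mem_A_of_mem_U hb)).mpr hb

end Cond

namespace Twins

variable {p q : Cond} {σ : CtblOrd → CtblOrd} {a b z w : CtblOrd} {i j k : ℕ}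

theorem n_eq (h : Twins p q σ) : p.n = q.n := h.1

theorem strictMonoOn (h : Twins p q σ) : StrictMonoOn σ p.A :=
  fun a ha b hb hab => h.2.2.2.1 a ha b hb hab

theorem map_mem (h : Twins p q σ) (ha : a ∈ p.A) : σ a ∈ q.A :=
  h.2.2.1 ▸ mem_image_of_mem σ ha

theorem map_eq_self (h : Twins p q σ) (hp : a ∈ p.A) (hq : a ∈ q.A) : σ a = a :=
  h.2.2.2.2.1 a (mem_inter.mpr ⟨hp, hq⟩)

theorem U_map (h : Twins p q σ) (ha : a ∈ p.A) (hi : i < p.n) :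
    q.U (σ a) i = (p.U a i).image σ :=
  h.2.2.2.2.2 a ha i hi

theorem map_mem_U_iff (h : Twins p q σ) (ha : a ∈ p.A) (hb : b ∈ p.A) :
    σ b ∈ q.U (σ a) i ↔ b ∈ p.U a i := by
  rcases lt_or_ge i p.n with hi | hi
  · rw [h.U_map ha hi, mem_image]
    refine ⟨?_, fun hb' => ⟨b, hb', rfl⟩⟩
    rintro ⟨c, hc, hcb⟩
    rwa [← h.strictMonoOn.injOn (Cond.mem_A_of_mem_U hc) hb hcb]
  · exact iff_of_false (fun hw => hi.not_gt (h.n_eq ▸ (Cond.dom_of_mem_U hw).2))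
      fun hw => hi.not_gt (Cond.dom_of_mem_U hw).2

theorem U_subset_U_iff (h : Twins p q σ) (ha : a ∈ p.A) (hb : b ∈ p.A) :
    q.U (σ a) i ⊆ q.U (σ b) j ↔ p.U a i ⊆ p.U b j := by
  constructor
  · intro hsub c hc
    have hcA := Cond.mem_A_of_mem_U hc
    exact (h.map_mem_U_iff hb hcA).mp (hsub ((h.map_mem_U_iff ha hcA).mpr hc))
  · intro hsub w hw
    obtain ⟨c, hc, rfl⟩ := mem_image.mp (h.2.2.1 ▸ Cond.mem_A_of_mem_U hw)
    exact (h.map_mem_U_iff hb hc).mpr (hsub ((h.map_mem_U_iff ha hc).mp hw))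

theorem symm (h : Twins p q σ) : ∃ τ, Twins q p τ := by
  have hbij : Set.BijOn σ p.A q.A := by
    refine ⟨fun a ha => h.map_mem ha, h.strictMonoOn.injOn, fun b hb => ?_⟩
    rw [← h.2.2.1, coe_image] at hb
    exact hb
  set τ := Function.invFunOn σ p.A
  have hinv : Set.InvOn τ σ p.A q.A := hbij.invOn_invFunOn
  have hτA : Set.MapsTo τ q.A p.A := hbij.surjOn.mapsTo_invFunOn
  refine ⟨τ, h.n_eq.symm, h.2.1.symm, ?_, fun a ha b hb hab => ?_, fun δ hδ => ?_,
    fun b hb i hi => ?_⟩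
  · rw [← coe_inj, coe_image]
    exact (hbij.symm hinv.symm).image_eq
  · refine (h.strictMonoOn.lt_iff_lt (hτA ha) (hτA hb)).mp ?_
    rwa [hinv.2 ha, hinv.2 hb]
  · obtain ⟨hδq, hδp⟩ := mem_inter.mp hδ
    conv_lhs => rw [← h.map_eq_self hδp hδq]
    exact hinv.1 hδp
  · obtain ⟨a, ha, rfl⟩ := hbij.surjOn hb
    rw [hinv.1 ha, h.U_map ha (h.n_eq ▸ hi), image_image,
      image_congr (f := τ ∘ σ) (g := id) fun c hc => hinv.1 (Cond.mem_A_of_mem_U hc), image_id]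

end Twins

namespace Cond

variable {p q : Cond} {x y z w : CtblOrd} {i j k : ℕ}

theorem extendsTriple_of_retraction {A : Finset CtblOrd} {n : ℕ}
    {U : CtblOrd → ℕ → Finset CtblOrd} (ρ : CtblOrd → CtblOrd) (hA : p.A ⊆ A) (hn : p.n ≤ n)
    (hρ : ∀ x ∈ p.A, ρ x = x) (hU : ∀ α ∈ p.A, ∀ i < p.n, p.U α i ⊆ U α i)
    (hret : ∀ α ∈ p.A, ∀ i < p.n, ∀ w ∈ U α i, ρ w ∈ p.U α i)
    (hmono : ∀ α ∈ p.A, ∀ i < p.n, ∀ β ∈ p.A, ∀ j < p.n, p.U α i ⊆ p.U β j → U α i ⊆ U β j) :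
    ExtendsTriple A n U p := by
  refine ⟨hA, hn, fun α hα i hi => ?_, fun α hα i hi β hβ j hj hdisj => ?_, hmono⟩
  · ext w
    rw [mem_inter]
    refine ⟨fun hw => ⟨hU α hα i hi hw, mem_A_of_mem_U hw⟩, fun ⟨hw, hwA⟩ => ?_⟩
    exact hρ w hwA ▸ hret α hα i hi w hw
  · rw [eq_empty_iff_forall_notMem] at hdisj ⊢
    intro w hw
    obtain ⟨hwα, hwβ⟩ := mem_inter.mp hw
    exact hdisj (ρ w) (mem_inter.mpr ⟨hret α hα i hi w hwα, hret β hβ j hj w hwβ⟩)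

theorem _root_.ExtendsTriple.le_of_mem_of_subset {A : Finset CtblOrd} {n : ℕ}
    {U : CtblOrd → ℕ → Finset CtblOrd} (hext : ExtendsTriple A n U p) (hx : x ∈ p.A)
    (hy : y ∈ p.A) (hi : i < p.n) (hyx : y ∈ U x i) (hsub : U x i ⊆ U y 0) : y ≤ x := by
  have hres := hext.2.2.1
  refine p.P3 x hx y hy i hi ?_ ?_
  · rw [hres x hx i hi]
    exact mem_inter.mpr ⟨hyx, hy⟩
  · rw [hres x hx i hi, hres y hy 0 (i.zero_le.trans_lt hi)]
    exact inter_subset_inter_right hsub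

def amalgU (p q : Cond) (x : CtblOrd) (i : ℕ) : Finset CtblOrd :=
  p.U x i ∪ q.U x i ∪
    {t ∈ (p.A ∩ q.A) ×ˢ range p.n | p.U t.1 t.2 ⊆ p.U x i ∨ q.U t.1 t.2 ⊆ q.U x i}.biUnion
      fun t => p.U t.1 t.2 ∪ q.U t.1 t.2

theorem mem_amalgU : w ∈ amalgU p q x i ↔ w ∈ p.U x i ∨ w ∈ q.U x i ∨
    ∃ z ∈ p.A ∩ q.A, ∃ k < p.n, (p.U z k ⊆ p.U x i ∨ q.U z k ⊆ q.U x i) ∧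
      (w ∈ p.U z k ∨ w ∈ q.U z k) := by
  simp only [amalgU, mem_union, mem_biUnion, mem_filter, mem_product, mem_range, Prod.exists,
    or_assoc]
  grind

theorem amalgU_comm (hn : p.n = q.n) : amalgU q p = amalgU p q := by
  ext x i w
  simp only [mem_amalgU, inter_comm q.A, hn]
  grind

theorem subset_amalgU_left : p.U x i ⊆ amalgU p q x i :=
  fun _ hw => mem_amalgU.mpr (Or.inl hw)

theorem subset_amalgU_right : q.U x i ⊆ amalgU p q x i :=
  fun _ hw => mem_amalgU.mpr (Or.inr (Or.inl hw))

theorem subset_amalgU_of_root (hz : z ∈ p.A ∩ q.A) (hk : k < p.n)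
    (hzx : p.U z k ⊆ p.U x i ∨ q.U z k ⊆ q.U x i) : p.U z k ∪ q.U z k ⊆ amalgU p q x i :=
  fun _ hw => mem_amalgU.mpr (Or.inr (Or.inr ⟨z, hz, k, hk, hzx, mem_union.mp hw⟩))

theorem amalgU_mono (hp : p.U x i ⊆ p.U y j) (hq : q.U x i ⊆ q.U y j) :
    amalgU p q x i ⊆ amalgU p q y j := by
  intro w hw
  rcases mem_amalgU.mp hw with hw | hw | ⟨z, hz, k, hk, hzx, hwz⟩
  · exact subset_amalgU_left (hp hw)
  · exact subset_amalgU_right (hq hw)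
  · exact subset_amalgU_of_root hz hk (hzx.imp (·.trans hp) (·.trans hq)) (mem_union.mpr hwz)

theorem amalgU_subset_union : amalgU p q x i ⊆ p.A ∪ q.A := by
  intro w hw
  rcases mem_amalgU.mp hw with hw | hw | ⟨z, -, k, -, -, hw | hw⟩
  all_goals first
    | exact mem_union_left _ (mem_A_of_mem_U hw)
    | exact mem_union_right _ (mem_A_of_mem_U hw)

theorem amalgU_eq_empty (hn : p.n = q.n) (hx : ¬(x ∈ p.A ∪ q.A ∧ i < p.n)) :
    amalgU p q x i = ∅ := by
  refine eq_empty_iff_forall_notMem.mpr fun w hw => hx ?_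
  rcases mem_amalgU.mp hw with hw | hw | ⟨z, hz, k, hk, hzx | hzx, -⟩
  · exact ⟨mem_union_left _ (dom_of_mem_U hw).1, (dom_of_mem_U hw).2⟩
  · exact ⟨mem_union_right _ (dom_of_mem_U hw).1, hn ▸ (dom_of_mem_U hw).2⟩
  · have hxi := dom_of_mem_U (hzx (p.P2_self z (mem_inter.mp hz).1 k hk))
    exact ⟨mem_union_left _ hxi.1, hxi.2⟩
  · have hxi := dom_of_mem_U (hzx (q.P2_self z (mem_inter.mp hz).2 k (hn ▸ hk)))
    exact ⟨mem_union_right _ hxi.1, hn ▸ hxi.2⟩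

end Cond

namespace Twins

open Cond

variable {p q : Cond} {σ : CtblOrd → CtblOrd} {x y z w : CtblOrd} {i j k : ℕ}

theorem U_subset_of_root (h : Twins p q σ) (hz : z ∈ p.A ∩ q.A) (hk : k < p.n) (hx : x ∈ q.A)
    (hzx : p.U z k ⊆ p.U x i ∨ q.U z k ⊆ q.U x i) : q.U z k ⊆ q.U x i := by
  refine hzx.elim (fun hzx => ?_) id
  obtain ⟨hzp, hzq⟩ := mem_inter.mp hz
  have hxp := (dom_of_mem_U (hzx (p.P2_self z hzp k hk))).1
  rwa [← h.map_eq_self hzp hzq, ← h.map_eq_self hxp hx, h.U_subset_U_iff hzp hxp]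

theorem piecewise_eq (h : Twins p q σ) (hw : w ∈ p.A) : q.A.piecewise id σ w = σ w := by
  by_cases hwq : w ∈ q.A
  · rw [piecewise_eq_of_mem _ _ _ hwq, id, h.map_eq_self hw hwq]
  · exact piecewise_eq_of_notMem _ _ _ hwq

theorem piecewise_mem_U_of_root (h : Twins p q σ) (hz : z ∈ p.A ∩ q.A)
    (hw : w ∈ p.U z k ∪ q.U z k) : q.A.piecewise id σ w ∈ q.U z k := by
  rcases mem_union.mp hw with hw | hw
  · obtain ⟨hzp, hzq⟩ := mem_inter.mp hz
    rw [h.piecewise_eq (mem_A_of_mem_U hw), ← h.map_eq_self hzp hzq]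
    exact (h.map_mem_U_iff hzp (mem_A_of_mem_U hw)).mpr hw
  · rwa [piecewise_eq_of_mem _ _ _ (mem_A_of_mem_U hw)]

theorem piecewise_mem_U (h : Twins p q σ) (hx : x ∈ q.A) (hw : w ∈ amalgU p q x i) :
    q.A.piecewise id σ w ∈ q.U x i := by
  rcases mem_amalgU.mp hw with hw | hw | ⟨z, hz, k, hk, hzx, hwz⟩
  · have hxp := (dom_of_mem_U hw).1
    exact h.piecewise_mem_U_of_root (mem_inter.mpr ⟨hxp, hx⟩) (mem_union_left _ hw)
  · rwa [piecewise_eq_of_mem _ _ _ (mem_A_of_mem_U hw)]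
  · exact h.U_subset_of_root hz hk hx hzx (h.piecewise_mem_U_of_root hz (mem_union.mpr hwz))

theorem amalgU_subset_amalgU (h : Twins p q σ) (hx : x ∈ q.A)
    (hxy : q.U x i ⊆ q.U y j) : amalgU p q x i ⊆ amalgU p q y j := by
  intro w hw
  rcases mem_amalgU.mp hw with hw | hw | ⟨z, hz, k, hk, hzx, hwz⟩
  · obtain ⟨hxp, hi⟩ := dom_of_mem_U hw
    exact subset_amalgU_of_root (mem_inter.mpr ⟨hxp, hx⟩) hi (Or.inr hxy) (mem_union_left _ hw)
  · exact subset_amalgU_right (hxy hw)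
  · exact subset_amalgU_of_root hz hk (Or.inr ((h.U_subset_of_root hz hk hx hzx).trans hxy))
      (mem_union.mpr hwz)

theorem extendsTriple_amalgU (h : Twins p q σ) :
    ExtendsTriple (p.A ∪ q.A) p.n (amalgU p q) q :=
  extendsTriple_of_retraction (q.A.piecewise id σ) subset_union_right h.n_eq.ge
    (fun _ hx => piecewise_eq_of_mem _ _ _ hx) (fun _ _ _ _ => subset_amalgU_right)
    (fun _ hx _ _ _ hw => h.piecewise_mem_U hx hw)
    (fun _ hx _ _ _ _ _ _ hxy => h.amalgU_subset_amalgU hx hxy)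

theorem not_amalgU_subset (h : Twins p q σ)
    (hS2 : ∀ x ∈ p.A, x ∈ q.A → ∀ y ∈ p.A, y ∉ q.A → x < y)
    (hxq : x ∉ q.A) (hyp : y ∉ p.A) (hyx : y ∈ amalgU p q x i) :
    ¬amalgU p q x i ⊆ amalgU p q y 0 := by
  intro hsub
  -- `y = σ δ` with `δ ∈ U_p(z,k) \ A_q` for a root point `z`; retracting the inclusion onto `q`
  -- gives `U_p(z,k) ⊆ U_p(δ,0)`, so (P3) in `p` forces `δ ≤ z`, although `z < δ`.
  obtain ⟨z, hz, k, hk, hzx, hyz⟩ :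
      ∃ z ∈ p.A ∩ q.A, ∃ k < p.n, p.U z k ⊆ p.U x i ∧ y ∈ q.U z k := by
    rcases mem_amalgU.mp hyx with hy | hy | ⟨z, hz, k, hk, hzx, hyz⟩
    · exact absurd (mem_A_of_mem_U hy) hyp
    · exact absurd (dom_of_mem_U hy).1 hxq
    · refine ⟨z, hz, k, hk, hzx.resolve_right fun hzx => hxq ?_, hyz.resolve_left fun hy => hyp ?_⟩
      · exact (dom_of_mem_U (hzx (q.P2_self z (mem_inter.mp hz).2 k (h.n_eq ▸ hk)))).1
      · exact mem_A_of_mem_U hy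
  obtain ⟨hzp, hzq⟩ := mem_inter.mp hz
  rw [← h.map_eq_self hzp hzq, h.U_map hzp hk] at hyz
  obtain ⟨δ, hδz, rfl⟩ := mem_image.mp hyz
  have hδp := mem_A_of_mem_U hδz
  have hδq : δ ∉ q.A := fun hδq => hyp (by rwa [h.map_eq_self hδp hδq])
  have hxδ : p.U x i ⊆ p.U δ 0 := by
    intro v hv
    have hvδ := h.piecewise_mem_U (h.map_mem hδp) (hsub (subset_amalgU_left hv))
    rw [h.piecewise_eq (mem_A_of_mem_U hv)] at hvδ
    exact (h.map_mem_U_iff hδp (mem_A_of_mem_U hv)).mp hvδ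
  exact (hS2 z hzp hzq δ hδp hδq).not_ge (p.P3 z hzp δ hδp k hk hδz (hzx.trans hxδ))

theorem exists_common_extension (h : Twins p q σ)
    (hS1 : ∀ x ∈ p.A, ∀ y ∈ q.A, y ∉ p.A → x < y)
    (hS2 : ∀ x ∈ p.A, x ∈ q.A → ∀ y ∈ p.A, y ∉ q.A → x < y) :
    ∃ r : Cond, r.le p ∧ r.le q := by
  obtain ⟨τ, hτ⟩ := h.symm
  have hq : ExtendsTriple (p.A ∪ q.A) p.n (amalgU p q) q := h.extendsTriple_amalgU
  have hp : ExtendsTriple (p.A ∪ q.A) p.n (amalgU p q) p := by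
    have := hτ.extendsTriple_amalgU
    rwa [union_comm, amalgU_comm h.n_eq, ← h.n_eq] at this
  refine ⟨⟨p.A ∪ q.A, p.n, amalgU p q, fun x i hx => amalgU_eq_empty h.n_eq hx,
    fun x _ i _ => amalgU_subset_union, fun x hx i hi => ?_,
    fun x _ i _ _ => amalgU_mono (p.U_antitone x (i.sub_le 1)) (q.U_antitone x (i.sub_le 1)),
    fun x hx y hy i hi hyx hsub => ?_⟩, hp, hq⟩
  · rcases mem_union.mp hx with hx | hx
    · exact subset_amalgU_left (p.P2_self x hx i hi)
    · exact subset_amalgU_right (q.P2_self x hx i (h.n_eq ▸ hi))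
  · by_cases hyp : y ∈ p.A
    · by_cases hxp : x ∈ p.A
      · exact hp.le_of_mem_of_subset hxp hyp hi hyx hsub
      · exact (hS1 y hyp x ((mem_union.mp hx).resolve_left hxp) hxp).le
    · by_cases hxq : x ∈ q.A
      · exact hq.le_of_mem_of_subset hxq ((mem_union.mp hy).resolve_left hyp) (h.n_eq ▸ hi) hyx hsub
      · exact absurd hsub (h.not_amalgU_subset hS2 hxq hyp hyx)

end Twins

theorem exists_ne_compatible_of_not_countable {S : Set Cond} (hS : ¬S.Countable) :
    ∃ p ∈ S, ∃ q ∈ S, p ≠ q ∧ ∃ r : Cond, r.le p ∧ r.le q := by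
  obtain ⟨π, hπ⟩ := exists_not_countable_fiber hS Cond.pattern
  obtain ⟨p, hp, q, hq, hpq, hS1, hS2⟩ := exists_separated_pair Cond.A CtblOrd.countable_Iio hπ
  obtain ⟨σ, hσ⟩ := Cond.exists_twins_of_pattern_eq (hp.2.trans hq.2.symm) hS1 hS2
  exact ⟨p, hp.1, q, hq.1, hpq, hσ.exists_common_extension hS1 hS2⟩

/-- The poset `P` of conditions satisfies the countable chain condition: any uncountable
set of conditions contains two distinct compatible elements; equivalently, every
antichain (set of pairwise incompatible conditions) is countable. -/
theorem cond_ccc :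
    (∀ S : Set Cond, ¬ S.Countable →
      ∃ p ∈ S, ∃ q ∈ S, p ≠ q ∧ ∃ r : Cond, Cond.le r p ∧ Cond.le r q) ∧
    (∀ T : Set Cond,
      (∀ p ∈ T, ∀ q ∈ T, p ≠ q → ¬ ∃ r : Cond, Cond.le r p ∧ Cond.le r q) →
      T.Countable) := by
  refine ⟨fun S hS => exists_ne_compatible_of_not_countable hS, fun T hT => ?_⟩
  by_contra hT'
  obtain ⟨p, hp, q, hq, hpq, hr⟩ := exists_ne_compatible_of_not_countable hT'
  exact hT p hp q hq hpq hr
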